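/- arXiv:2206.04921 — 7 statements merged into one kernel-verified Lean document; each statement's English description precedes it below -/
import Mathlib

section
/- Let S' be a finite set of states containing a distinguished goal state g, and let T̂ be the operator on functions V : S' → ℝ with V(g) = 0 defined by T̂V(s) = Σ_a π(a|s)(ĉ(s,a) + Σ_{s'} P̃(s'|s,a)V(s')), where π(·|s) is a probability distribution over a finite action set, ĉ(g,a) = 0, P̃(·|g,a) = δ_g, and for each (s,a) with s ≠ g, P̃(s'|s,a) = (n(s,a)/(n(s,a)+1))·P̂(s'|s,a) + 𝟙[s'=g]/(n(s,a)+1) for some probability distribution P̂(·|s,a) and nonnegative integer n(s,a). Then T̂ is a ρ-contraction in the sup-norm on {V : V(g) = 0}, where ρ = max_{s≠g, a} n(s,a)/(n(s,a)+1) < 1; that is, ‖T̂V₁ − T̂V₂‖_∞ ≤ ρ‖V₁ − V₂‖_∞ for all V₁, V₂ with V₁(g) = V₂(g) = 0. -/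
open Finset

/-!
On a state `s ≠ g` the perturbed kernel is `n/(n+1)` times a probability kernel plus mass on the
goal, and the goal mass is invisible to functions vanishing at `g`. So the Bellman difference at
`s` is a `π`-average of `n/(n+1)` times `P̂`-averages of `V₁ - V₂`, each bounded by `ρ‖V₁ - V₂‖`;
at `g` itself the difference is `V₁ g - V₂ g = 0`.
-/

theorem abs_sum_mul_le_of_stochastic {ι : Type*} [Fintype ι] {w f : ι → ℝ} {M : ℝ}
    (hw0 : ∀ i, 0 ≤ w i) (hw1 : ∑ i, w i = 1) (hf : ∀ i, |f i| ≤ M) :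
    |∑ i, w i * f i| ≤ M :=
  calc |∑ i, w i * f i| ≤ ∑ i, w i * |f i| := by
        refine (abs_sum_le_sum_abs _ _).trans_eq (sum_congr rfl fun i _ => ?_)
        rw [abs_mul, abs_of_nonneg (hw0 i)]
    _ ≤ ∑ i, w i * M := sum_le_sum fun i _ => mul_le_mul_of_nonneg_left (hf i) (hw0 i)
    _ = M := by rw [← sum_mul, hw1, one_mul]

theorem natCast_div_add_one_lt_one (k : ℕ) : (k : ℝ) / (k + 1) < 1 :=
  (div_lt_one (by positivity)).2 (lt_add_one _)

theorem sum_mul_of_eq_zero_at_goal {S : Type*} [Fintype S] [DecidableEq S] {g : S} {W : S → ℝ}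
    (hW : W g = 0) (t c : ℝ) (p : S → ℝ) :
    ∑ s', (t * p s' + (if s' = g then (1 : ℝ) else 0) / c) * W s' = t * ∑ s', p s' * W s' := by
  simp [add_mul, sum_add_distrib, ite_div, hW, mul_sum, mul_assoc]

section Bellman

variable {S A : Type*} [Fintype S] [Fintype A]

def policyBellman (π c : S → A → ℝ) (P : S → A → S → ℝ) (V : S → ℝ) (s : S) : ℝ :=
  ∑ a, π s a * (c s a + ∑ s', P s a s' * V s')

theorem policyBellman_sub (π c : S → A → ℝ) (P : S → A → S → ℝ) (V₁ V₂ : S → ℝ) (s : S) :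
    policyBellman π c P V₁ s - policyBellman π c P V₂ s
      = ∑ a, π s a * ∑ s', P s a s' * (V₁ s' - V₂ s') := by
  simp only [policyBellman, ← sum_sub_distrib, ← mul_sub, add_sub_add_left_eq_sub]

theorem abs_policyBellman_sub_le {π : S → A → ℝ} (hπ0 : ∀ s a, 0 ≤ π s a)
    (hπ1 : ∀ s, ∑ a, π s a = 1) (c : S → A → ℝ) {P : S → A → S → ℝ} {V₁ V₂ : S → ℝ} {s : S}
    {K : ℝ} (hrow : ∀ a, |∑ s', P s a s' * (V₁ s' - V₂ s')| ≤ K) :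
    |policyBellman π c P V₁ s - policyBellman π c P V₂ s| ≤ K := by
  rw [policyBellman_sub]
  exact abs_sum_mul_le_of_stochastic (hπ0 s) (hπ1 s) hrow

end Bellman

theorem stmt_1_general {S A : Type*} [Fintype S] [Fintype A] [DecidableEq S]
    (g : S)
    (π : S → A → ℝ) (hπ0 : ∀ s a, 0 ≤ π s a) (hπ1 : ∀ s, ∑ a, π s a = 1)
    (chat : S → A → ℝ)
    (Phat : S → A → S → ℝ) (hPhat0 : ∀ s a s', 0 ≤ Phat s a s')
    (hPhat1 : ∀ s a, ∑ s', Phat s a s' = 1)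
    (n : S → A → ℕ)
    (Ptil : S → A → S → ℝ)
    (hPtil : ∀ s a s', s ≠ g →
      Ptil s a s' = ((n s a : ℝ) / ((n s a : ℝ) + 1)) * Phat s a s'
        + (if s' = g then (1 : ℝ) else 0) / ((n s a : ℝ) + 1))
    (hPtilg : ∀ (a : A) (s' : S), Ptil g a s' = if s' = g then (1 : ℝ) else 0)
    (ρ : ℝ)
    (hprod : (((Finset.univ.filter (fun s : S => s ≠ g)) ×ˢ
        (Finset.univ : Finset A))).Nonempty)
    (hρ : ρ = ((Finset.univ.filter (fun s : S => s ≠ g)) ×ˢ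
        (Finset.univ : Finset A)).sup' hprod
        (fun q => (n q.1 q.2 : ℝ) / ((n q.1 q.2 : ℝ) + 1))) :
    ρ < 1 ∧
    ∀ V₁ V₂ : S → ℝ, V₁ g = 0 → V₂ g = 0 →
      (Finset.univ : Finset S).sup' ⟨g, Finset.mem_univ g⟩
          (fun s => |(∑ a, π s a * (chat s a + ∑ s', Ptil s a s' * V₁ s'))
            - (∑ a, π s a * (chat s a + ∑ s', Ptil s a s' * V₂ s'))|)
        ≤ ρ * (Finset.univ : Finset S).sup' ⟨g, Finset.mem_univ g⟩
            (fun s => |V₁ s - V₂ s|) := by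
  have hratio_le : ∀ s, s ≠ g → ∀ a, (n s a : ℝ) / (n s a + 1) ≤ ρ := fun s hs a => by
    rw [hρ]
    exact le_sup' (fun q : S × A => (n q.1 q.2 : ℝ) / (n q.1 q.2 + 1))
      (b := (s, a)) (mem_product.2 ⟨mem_filter.2 ⟨mem_univ s, hs⟩, mem_univ a⟩)
  have hρ0 : 0 ≤ ρ := by
    obtain ⟨⟨s, a⟩, hq⟩ := hprod
    exact (by positivity : (0 : ℝ) ≤ n s a / (n s a + 1)).trans
      (hratio_le s (by simpa using hq) a)
  refine ⟨hρ ▸ (sup'_lt_iff _).2 fun q _ => natCast_div_add_one_lt_one _,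
    fun V₁ V₂ h₁ h₂ => sup'_le _ _ fun s _ => ?_⟩
  set M := univ.sup' ⟨g, mem_univ g⟩ fun s => |V₁ s - V₂ s|
  have hM : ∀ s', |V₁ s' - V₂ s'| ≤ M := fun s' => le_sup' (fun s => |V₁ s - V₂ s|) (mem_univ s')
  have hWg : V₁ g - V₂ g = 0 := by rw [h₁, h₂, sub_self]
  refine abs_policyBellman_sub_le hπ0 hπ1 chat fun a => ?_
  by_cases hs : s = g
  · subst hs
    simp only [hPtilg, ite_mul, one_mul, zero_mul, sum_ite_eq', mem_univ, if_true, hWg, abs_zero]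
    exact mul_nonneg hρ0 ((abs_nonneg _).trans (hM s))
  · have hratio0 : (0 : ℝ) ≤ n s a / (n s a + 1) := by positivity
    simp only [hPtil s a _ hs]
    rw [sum_mul_of_eq_zero_at_goal (W := fun s' => V₁ s' - V₂ s') hWg, abs_mul,
      abs_of_nonneg hratio0]
    exact mul_le_mul (hratio_le s hs a) (abs_sum_mul_le_of_stochastic (hPhat0 s a) (hPhat1 s a) hM)
      (abs_nonneg _) hρ0

/-- The empirical Bellman evaluation operator with the goal-perturbed kernel is a
`ρ`-contraction in sup-norm on `{V : V g = 0}`, where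
`ρ = max_{s ≠ g, a} n(s,a)/(n(s,a)+1) < 1`. -/
theorem stmt_1 {S A : Type*} [Fintype S] [Fintype A] [DecidableEq S]
    (g : S)
    (π : S → A → ℝ) (hπ0 : ∀ s a, 0 ≤ π s a) (hπ1 : ∀ s, ∑ a, π s a = 1)
    (chat : S → A → ℝ) (hcg : ∀ a, chat g a = 0)
    (Phat : S → A → S → ℝ) (hPhat0 : ∀ s a s', 0 ≤ Phat s a s')
    (hPhat1 : ∀ s a, ∑ s', Phat s a s' = 1)
    (n : S → A → ℕ)
    (Ptil : S → A → S → ℝ)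
    (hPtil : ∀ s a s', s ≠ g →
      Ptil s a s' = ((n s a : ℝ) / ((n s a : ℝ) + 1)) * Phat s a s'
        + (if s' = g then (1 : ℝ) else 0) / ((n s a : ℝ) + 1))
    (hPtilg : ∀ (a : A) (s' : S), Ptil g a s' = if s' = g then (1 : ℝ) else 0)
    (ρ : ℝ)
    (hprod : (((Finset.univ.filter (fun s : S => s ≠ g)) ×ˢ
        (Finset.univ : Finset A))).Nonempty)
    (hρ : ρ = ((Finset.univ.filter (fun s : S => s ≠ g)) ×ˢ
        (Finset.univ : Finset A)).sup' hprod
        (fun q => (n q.1 q.2 : ℝ) / ((n q.1 q.2 : ℝ) + 1))) :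
    ρ < 1 ∧
    ∀ V₁ V₂ : S → ℝ, V₁ g = 0 → V₂ g = 0 →
      (Finset.univ : Finset S).sup' ⟨g, Finset.mem_univ g⟩
          (fun s => |(∑ a, π s a * (chat s a + ∑ s', Ptil s a s' * V₁ s'))
            - (∑ a, π s a * (chat s a + ∑ s', Ptil s a s' * V₂ s'))|)
        ≤ ρ * (Finset.univ : Finset S).sup' ⟨g, Finset.mem_univ g⟩
            (fun s => |V₁ s - V₂ s|) :=
  stmt_1_general g π hπ0 hπ1 chat Phat hPhat0 hPhat1 n Ptil hPtil hPtilg ρ hprod hρ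
end

section
/- Let p be a probability vector on a finite set S' containing g, and let V : S' → ℝ with V(g) = 0. Define the perturbed probability vector p̃ = (n/(n+1))·p + (1/(n+1))·δ_g for a nonnegative integer n (where in fact p is P̂(·|s,a) and n = n(s,a)). Then |p̃·V − p·V| ≤ ‖V‖_∞/(n+1), and |Var_{p̃}(V) − Var_p(V)| ≤ 2‖V‖_∞²·(S+1)/(n+1), where Var_q(V) = q·V² − (q·V)² and S+1 = |S'|. -/
/-!
Write `c = n/(n+1)`. Since `p̃` agrees with `c • p` away from `g` and both `V` and `V²` vanish
at `g`, we get `p̃·V = c (p·V)` and `p̃·V² = c (p·V²)`. With `E = p·V` and `E₂ = p·V²` the mean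
changes by `(1 - c) E` and the variance by `(1 - c) ((1 + c) E² - E₂)`; Jensen's inequality
`E² ≤ E₂ ≤ B²` bounds the last factor by `B²` in absolute value.
-/

open Finset

section WeightedSums

variable {S : Type*} [Fintype S]

theorem sum_mul_eq_mul_sum_of_eq_off {g : S} {p q W : S → ℝ} (c : ℝ)
    (hq : ∀ s, s ≠ g → q s = c * p s) (hW : W g = 0) :
    ∑ s, q s * W s = c * ∑ s, p s * W s := by
  rw [mul_sum]
  refine sum_congr rfl fun s _ => ?_
  by_cases hs : s = g
  · simp [hs, hW]
  · rw [hq s hs, mul_assoc]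

theorem abs_sum_mul_le_of_abs_le {p V : S → ℝ} {B : ℝ} (hp0 : ∀ s, 0 ≤ p s)
    (hp1 : ∑ s, p s = 1) (hB : ∀ s, |V s| ≤ B) :
    |∑ s, p s * V s| ≤ B :=
  calc |∑ s, p s * V s| ≤ ∑ s, p s * |V s| := by
        refine (abs_sum_le_sum_abs _ _).trans_eq (sum_congr rfl fun s _ => ?_)
        rw [abs_mul, abs_of_nonneg (hp0 s)]
    _ ≤ ∑ s, p s * B := sum_le_sum fun s _ => mul_le_mul_of_nonneg_left (hB s) (hp0 s)
    _ = B := by rw [← sum_mul, hp1, one_mul]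

end WeightedSums

theorem abs_variance_scale_sub_le {c E E₂ B : ℝ} (hc0 : 0 ≤ c) (hc1 : c ≤ 1)
    (hE : E ^ 2 ≤ E₂) (hE₂ : E₂ ≤ B ^ 2) :
    |(c * E₂ - (c * E) ^ 2) - (E₂ - E ^ 2)| ≤ (1 - c) * B ^ 2 := by
  have hfactor : (c * E₂ - (c * E) ^ 2) - (E₂ - E ^ 2) = (1 - c) * ((1 + c) * E ^ 2 - E₂) := by
    ring
  have hbound : |(1 + c) * E ^ 2 - E₂| ≤ B ^ 2 := by
    rw [abs_le]
    constructor <;> nlinarith [sq_nonneg E]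
  rw [hfactor, abs_mul, abs_of_nonneg (sub_nonneg.mpr hc1)]
  exact mul_le_mul_of_nonneg_left hbound (sub_nonneg.mpr hc1)

/-- Perturbing a probability vector by shifting `1/(n+1)` mass to the goal state changes
expectations of `V` (with `V g = 0`) by at most `‖V‖_∞/(n+1)` and variances by at most
`2‖V‖_∞² |S'|/(n+1)`. -/
theorem stmt_4 {S' : Type*} [Fintype S'] [DecidableEq S'] (g : S')
    (p : S' → ℝ) (hp0 : ∀ s, 0 ≤ p s) (hp1 : ∑ s, p s = 1)
    (V : S' → ℝ) (hVg : V g = 0)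
    (n : ℕ) (ptil : S' → ℝ)
    (hptil : ∀ s, ptil s = ((n : ℝ) / ((n : ℝ) + 1)) * p s
        + (if s = g then (1 : ℝ) else 0) / ((n : ℝ) + 1))
    (B : ℝ) (hB : ∀ s, |V s| ≤ B) :
    |(∑ s, ptil s * V s) - ∑ s, p s * V s| ≤ B / ((n : ℝ) + 1) ∧
    |((∑ s, ptil s * (V s) ^ 2) - (∑ s, ptil s * V s) ^ 2)
        - ((∑ s, p s * (V s) ^ 2) - (∑ s, p s * V s) ^ 2)|
      ≤ 2 * B ^ 2 * (Fintype.card S' : ℝ) / ((n : ℝ) + 1) := by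
  set c : ℝ := (n : ℝ) / ((n : ℝ) + 1)
  have hoff : ∀ s, s ≠ g → ptil s = c * p s := fun s hs => by simp [hptil, hs]
  have hmean := sum_mul_eq_mul_sum_of_eq_off c hoff hVg
  have hsq := sum_mul_eq_mul_sum_of_eq_off (W := fun s => V s ^ 2) c hoff (by simp [hVg])
  have hc : 1 - c = 1 / ((n : ℝ) + 1) := by simp only [c]; field_simp; ring
  have hc0 : 0 ≤ c := by positivity
  have hc1 : c ≤ 1 := by linarith [show 0 ≤ 1 / ((n : ℝ) + 1) by positivity]
  have hE := abs_sum_mul_le_of_abs_le hp0 hp1 hB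
  have hjensen := Real.pow_arith_mean_le_arith_mean_pow_of_even univ p V
    (fun s _ => hp0 s) hp1 even_two
  have hE₂ := abs_sum_mul_le_of_abs_le (V := fun s => V s ^ 2) hp0 hp1
    fun s => by rw [abs_pow]; exact pow_le_pow_left₀ (abs_nonneg _) (hB s) 2
  have hcard : (1 : ℝ) ≤ Fintype.card S' := by exact_mod_cast Fintype.card_pos_iff.mpr ⟨g⟩
  refine ⟨?_, ?_⟩
  · rw [hmean, ← neg_sub, ← one_sub_mul, abs_neg, abs_mul, abs_of_nonneg (sub_nonneg.mpr hc1),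
      hc, one_div_mul_eq_div]
    gcongr
  · rw [hmean, hsq]
    calc _ ≤ (1 - c) * B ^ 2 := abs_variance_scale_sub_le hc0 hc1 hjensen (le_of_abs_le hE₂)
      _ ≤ 2 * B ^ 2 * (Fintype.card S' : ℝ) / ((n : ℝ) + 1) := by
        rw [hc, one_div_mul_eq_div]
        gcongr
        nlinarith [sq_nonneg B]
end

section
/- Let P be a transition kernel on a finite state space S' = S ∪ {g} with g absorbing, π a policy, and ξ_h(s,a) the marginal state-action occupancy at step h starting from initial distribution ξ_0. Suppose V : S' → [0, ∞) satisfies V(g) = 0 and the superharmonicity condition V(s) ≥ Σ_a π(a|s)·P_{s,a}V for all s ∈ S. Then Σ_{h=0}^∞ Σ_{s≠g,a} ξ_h(s,a)·Var_{P_{s,a}}(V) ≤ 2‖V‖_∞ · Σ_{s≠g} ξ_0(s)V(s) ≤ 2‖V‖_∞². -/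
open Finset

private lemma jensen_sq {ι : Type*} [Fintype ι] (w x : ι → ℝ) (hw : ∀ i, 0 ≤ w i)
    (hw1 : ∑ i, w i = 1) : (∑ i, w i * x i) ^ 2 ≤ ∑ i, w i * x i ^ 2 := by
  have := Finset.sum_sq_le_sum_mul_sum_of_sq_eq_mul Finset.univ
    (r := fun i => w i * x i) (f := fun i => w i) (g := fun i => w i * x i ^ 2)
    (fun i _ => hw i) (fun i _ => mul_nonneg (hw i) (sq_nonneg _))
    (fun i _ => by ring)
  simpa [hw1] using this

/-- Dependency improvement lemma: for a superharmonic nonnegative `V` vanishing at the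
absorbing goal `g`, the occupancy-weighted sum of conditional variances is bounded by
`2‖V‖_∞ ⬝ ξ₀(V) ≤ 2‖V‖_∞²`. -/
theorem stmt_6 {S A : Type*} [Fintype S] [Fintype A] [DecidableEq S]
    (g : S)
    (P : S → A → S → ℝ) (hP0 : ∀ s a s', 0 ≤ P s a s')
    (hP1 : ∀ s a, ∑ s', P s a s' = 1)
    (habs : ∀ (a : A) (s' : S), P g a s' = if s' = g then (1 : ℝ) else 0)
    (π : S → A → ℝ) (hπ0 : ∀ s a, 0 ≤ π s a) (hπ1 : ∀ s, ∑ a, π s a = 1)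
    (ξ0 : S → ℝ) (hξ00 : ∀ s, 0 ≤ ξ0 s) (hξ01 : ∑ s, ξ0 s = 1)
    (ξ : ℕ → S → ℝ) (hξinit : ξ 0 = ξ0)
    (hξrec : ∀ h s', ξ (h + 1) s' = ∑ s, ∑ a, ξ h s * π s a * P s a s')
    (V : S → ℝ) (hV0 : ∀ s, 0 ≤ V s) (hVg : V g = 0)
    (hsuper : ∀ s, s ≠ g → (∑ a, π s a * ∑ s', P s a s' * V s') ≤ V s)
    (B : ℝ) (hB : ∀ s, V s ≤ B) :
    (∑' h : ℕ, ENNReal.ofReal (∑ s ∈ Finset.univ.filter (fun s : S => s ≠ g), ∑ a,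
        ξ h s * π s a *
          ((∑ s', P s a s' * (V s') ^ 2) - (∑ s', P s a s' * V s') ^ 2)))
      ≤ ENNReal.ofReal (2 * B * ∑ s ∈ Finset.univ.filter (fun s : S => s ≠ g),
          ξ0 s * V s) ∧
    ENNReal.ofReal (2 * B * ∑ s ∈ Finset.univ.filter (fun s : S => s ≠ g), ξ0 s * V s)
      ≤ ENNReal.ofReal (2 * B ^ 2) := by
  have hB0 : (0:ℝ) ≤ B := le_trans (hV0 g) (hB g)
  -- sums over filter equal sums over univ when vanishing at g
  have hfil : ∀ (f : S → ℝ), f g = 0 →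
      ∑ s ∈ Finset.univ.filter (fun s : S => s ≠ g), f s = ∑ s, f s := by
    intro f hf
    rw [Finset.filter_ne', Finset.sum_erase _ hf]
  have hPg : ∀ (a : A) (f : S → ℝ), ∑ s', P g a s' * f s' = f g := by
    intro a f
    simp [habs, ite_mul]
  -- nonnegativity of occupancy
  have hξnn : ∀ h s, 0 ≤ ξ h s := by
    intro h
    induction h with
    | zero => intro s; rw [hξinit]; exact hξ00 s
    | succ n ih =>
      intro s'
      rw [hξrec]
      exact Finset.sum_nonneg fun s _ => Finset.sum_nonneg fun a _ =>
        mul_nonneg (mul_nonneg (ih s) (hπ0 s a)) (hP0 s a s')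
  -- abbreviations
  set u : S → ℝ := fun s => ∑ a, π s a * ∑ s', P s a s' * V s' with hu
  set X : S → ℝ := fun s => ∑ a, π s a * ∑ s', P s a s' * (V s') ^ 2 with hX
  have hu0 : ∀ s, 0 ≤ u s := fun s => Finset.sum_nonneg fun a _ =>
    mul_nonneg (hπ0 s a) (Finset.sum_nonneg fun s' _ => mul_nonneg (hP0 s a s') (hV0 s'))
  have hug : u g = 0 := by
    simp [hu, hPg, hVg]
  have hXg : X g = 0 := by
    simp [hX, hPg, hVg]
  have huV : ∀ s, u s ≤ V s := by
    intro s
    by_cases hs : s = g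
    · subst hs; rw [hug, hVg]
    · exact hsuper s hs
  -- propagation identity
  have hnext : ∀ (h : ℕ) (f : S → ℝ), ∑ s', ξ (h+1) s' * f s'
      = ∑ s, ξ h s * ∑ a, π s a * ∑ s', P s a s' * f s' := by
    intro h f
    simp_rw [hξrec, Finset.sum_mul]
    rw [Finset.sum_comm]
    refine Finset.sum_congr rfl fun s _ => ?_
    rw [Finset.sum_comm, Finset.mul_sum]
    refine Finset.sum_congr rfl fun a _ => ?_
    rw [Finset.mul_sum, Finset.mul_sum]
    exact Finset.sum_congr rfl fun s' _ => by ring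
  have hW : ∀ h, ∑ s', ξ (h+1) s' * V s' = ∑ s, ξ h s * u s := fun h => hnext h V
  have hQ : ∀ h, ∑ s', ξ (h+1) s' * (V s') ^ 2 = ∑ s, ξ h s * X s := fun h =>
    hnext h (fun s => V s ^ 2)
  -- potential function
  set D : ℕ → ℝ := fun h => 2 * B * (∑ s, ξ h s * V s) - ∑ s, ξ h s * V s ^ 2 with hD
  -- nonnegativity of each variance term
  have hvar : ∀ s a, (∑ s', P s a s' * V s') ^ 2 ≤ ∑ s', P s a s' * V s' ^ 2 :=
    fun s a => jensen_sq (P s a) V (hP0 s a) (hP1 s a)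
  have hterm0 : ∀ h, 0 ≤ ∑ s ∈ Finset.univ.filter (fun s : S => s ≠ g), ∑ a,
      ξ h s * π s a * ((∑ s', P s a s' * (V s') ^ 2) - (∑ s', P s a s' * V s') ^ 2) := by
    intro h
    refine Finset.sum_nonneg fun s _ => Finset.sum_nonneg fun a _ =>
      mul_nonneg (mul_nonneg (hξnn h s) (hπ0 s a)) (sub_nonneg.2 (hvar s a))
  -- key per-step bound
  have key : ∀ h, (∑ s ∈ Finset.univ.filter (fun s : S => s ≠ g), ∑ a,
      ξ h s * π s a * ((∑ s', P s a s' * (V s') ^ 2) - (∑ s', P s a s' * V s') ^ 2))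
      ≤ D h - D (h+1) := by
    intro h
    have step1 : ∀ s, (∑ a, ξ h s * π s a *
        ((∑ s', P s a s' * (V s') ^ 2) - (∑ s', P s a s' * V s') ^ 2))
        ≤ ξ h s * (X s - V s ^ 2 + 2 * B * (V s - u s)) := by
      intro s
      have jens : (u s) ^ 2 ≤ ∑ a, π s a * (∑ s', P s a s' * V s') ^ 2 :=
        jensen_sq (π s) (fun a => ∑ s', P s a s' * V s') (hπ0 s) (hπ1 s)
      have h2 : V s ^ 2 - u s ^ 2 ≤ 2 * B * (V s - u s) := by
        nlinarith [huV s, hu0 s, hB s, hB0]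
      have expand : (∑ a, ξ h s * π s a *
          ((∑ s', P s a s' * (V s') ^ 2) - (∑ s', P s a s' * V s') ^ 2))
          = ξ h s * (X s - ∑ a, π s a * (∑ s', P s a s' * V s') ^ 2) := by
        rw [hX, mul_sub, Finset.mul_sum, Finset.mul_sum, ← Finset.sum_sub_distrib]
        refine Finset.sum_congr rfl fun a _ => ?_
        ring
      rw [expand]
      have : X s - ∑ a, π s a * (∑ s', P s a s' * V s') ^ 2
          ≤ X s - V s ^ 2 + 2 * B * (V s - u s) := by linarith
      exact mul_le_mul_of_nonneg_left this (hξnn h s)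
    calc (∑ s ∈ Finset.univ.filter (fun s : S => s ≠ g), ∑ a,
        ξ h s * π s a * ((∑ s', P s a s' * (V s') ^ 2) - (∑ s', P s a s' * V s') ^ 2))
        ≤ ∑ s ∈ Finset.univ.filter (fun s : S => s ≠ g),
            ξ h s * (X s - V s ^ 2 + 2 * B * (V s - u s)) :=
          Finset.sum_le_sum fun s _ => step1 s
      _ = ∑ s, ξ h s * (X s - V s ^ 2 + 2 * B * (V s - u s)) := by
          refine hfil _ ?_
          rw [hXg, hVg, hug]; ring
      _ = D h - D (h+1) := by
          rw [hD]
          simp only [hW h, hQ h]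
          rw [Finset.mul_sum, Finset.mul_sum, ← Finset.sum_sub_distrib,
            ← Finset.sum_sub_distrib, ← Finset.sum_sub_distrib]
          exact Finset.sum_congr rfl fun s _ => by ring
  -- D is nonnegative and bounded
  have hDnn : ∀ h, 0 ≤ D h := by
    intro h
    simp only [hD]
    have : ∑ s, ξ h s * V s ^ 2 ≤ ∑ s, 2 * B * (ξ h s * V s) := by
      refine Finset.sum_le_sum fun s _ => ?_
      nlinarith [mul_nonneg (hξnn h s) (mul_nonneg hB0 (hV0 s)),
        mul_le_mul_of_nonneg_left (mul_le_mul_of_nonneg_right (hB s) (hV0 s)) (hξnn h s)]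
    rw [← Finset.mul_sum] at this
    simpa using sub_nonneg.2 this
  have hW0 : ∑ s ∈ Finset.univ.filter (fun s : S => s ≠ g), ξ0 s * V s
      = ∑ s, ξ0 s * V s := hfil _ (by rw [hVg]; ring)
  have hD0 : D 0 ≤ 2 * B * ∑ s ∈ Finset.univ.filter (fun s : S => s ≠ g), ξ0 s * V s := by
    simp only [hD, hξinit, hW0]
    have : 0 ≤ ∑ s, ξ0 s * V s ^ 2 :=
      Finset.sum_nonneg fun s _ => mul_nonneg (hξ00 s) (sq_nonneg _)
    linarith
  -- partial sums bound
  have hpartial : ∀ H : ℕ, (∑ h ∈ Finset.range H, ∑ s ∈ Finset.univ.filter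
      (fun s : S => s ≠ g), ∑ a, ξ h s * π s a *
        ((∑ s', P s a s' * (V s') ^ 2) - (∑ s', P s a s' * V s') ^ 2))
      ≤ 2 * B * ∑ s ∈ Finset.univ.filter (fun s : S => s ≠ g), ξ0 s * V s := by
    intro H
    calc (∑ h ∈ Finset.range H, ∑ s ∈ Finset.univ.filter
        (fun s : S => s ≠ g), ∑ a, ξ h s * π s a *
          ((∑ s', P s a s' * (V s') ^ 2) - (∑ s', P s a s' * V s') ^ 2))
        ≤ ∑ h ∈ Finset.range H, (D h - D (h+1)) :=
          Finset.sum_le_sum fun h _ => key h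
      _ = D 0 - D H := Finset.sum_range_sub' D H
      _ ≤ D 0 := by linarith [hDnn H]
      _ ≤ _ := hD0
  constructor
  · rw [ENNReal.tsum_eq_iSup_sum]
    refine iSup_le fun t => ?_
    set N := t.sup id + 1 with hN
    have hsub : t ⊆ Finset.range N := fun h ht =>
      Finset.mem_range.2 (Nat.lt_succ_of_le (Finset.le_sup (f := id) ht))
    calc (∑ h ∈ t, ENNReal.ofReal (∑ s ∈ Finset.univ.filter (fun s : S => s ≠ g), ∑ a,
          ξ h s * π s a * ((∑ s', P s a s' * (V s') ^ 2) - (∑ s', P s a s' * V s') ^ 2)))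
        ≤ ∑ h ∈ Finset.range N, ENNReal.ofReal (∑ s ∈ Finset.univ.filter
            (fun s : S => s ≠ g), ∑ a, ξ h s * π s a *
              ((∑ s', P s a s' * (V s') ^ 2) - (∑ s', P s a s' * V s') ^ 2)) :=
          Finset.sum_le_sum_of_subset hsub
      _ = ENNReal.ofReal (∑ h ∈ Finset.range N, ∑ s ∈ Finset.univ.filter
            (fun s : S => s ≠ g), ∑ a, ξ h s * π s a *
              ((∑ s', P s a s' * (V s') ^ 2) - (∑ s', P s a s' * V s') ^ 2)) :=
          (ENNReal.ofReal_sum_of_nonneg fun h _ => hterm0 h).symm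
      _ ≤ _ := ENNReal.ofReal_le_ofReal (hpartial N)
  · refine ENNReal.ofReal_le_ofReal ?_
    have h1 : ∑ s ∈ Finset.univ.filter (fun s : S => s ≠ g), ξ0 s * V s ≤ B := by
      rw [hW0]
      calc ∑ s, ξ0 s * V s ≤ ∑ s, ξ0 s * B :=
            Finset.sum_le_sum fun s _ => mul_le_mul_of_nonneg_left (hB s) (hξ00 s)
        _ = B := by rw [← Finset.sum_mul, hξ01, one_mul]
    nlinarith [hB0]
end

section
/- For n ≥ 1, there exists a subset V of the hypercube {−1,1}^n such that |V| ≥ 2^{n/8} and for any two distinct v, w ∈ V, the ℓ¹-distance satisfies ‖v − w‖₁ ≥ n/2 (equivalently, the Hamming distance between v and w is at least n/4). -/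
/-!
Take a binary code of maximum size among those with minimum Hamming distance `> n / 4`. By
maximality the Hamming balls of radius `n / 4` around the codewords cover `{0,1}^n`, and each
ball has at most `∑_{k ≤ n/4} C(n,k) ≤ 3^(n/4) (4/3)^n` points (compare with `(1/3 + 1)^n`),
so the code has at least `2^n / (3^(n/4) (4/3)^n) ≥ 2^(n/8)` words. Under `b ↦ ±1` the
`ℓ¹`-distance is twice the Hamming distance.
-/

open Finset

section Hamming

variable {ι : Type*} [Fintype ι]

section Code

variable {β : Type*} [Fintype β] [DecidableEq β]

lemma exists_code_covering (r : ℕ) :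
    ∃ V : Finset (ι → β), (∀ v ∈ V, ∀ w ∈ V, v ≠ w → r < hammingDist v w) ∧
      ∀ u, ∃ v ∈ V, hammingDist v u ≤ r := by
  classical
  let IsCode (S : Finset (ι → β)) : Prop :=
    ∀ v ∈ S, ∀ w ∈ S, v ≠ w → r < hammingDist v w
  obtain ⟨V, hV, hmax⟩ := exists_max_image {S | IsCode S} card ⟨∅, by simp [IsCode]⟩
  rw [mem_filter] at hV
  refine ⟨V, hV.2, fun u => ?_⟩
  -- a word at distance `> r` from every codeword would extend the code of maximum size
  by_contra! hfar
  have hu : u ∉ V := fun huV => by simpa using hfar u huV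
  have hcode : IsCode (insert u V) := by
    simp only [IsCode, mem_insert, forall_eq_or_imp]
    refine ⟨⟨fun h => absurd rfl h, fun w hw _ => hammingDist_comm u w ▸ hfar w hw⟩,
      fun v hv => ⟨fun _ => hfar v hv, hV.2 v hv⟩⟩
  have := hmax _ (mem_filter.2 ⟨mem_univ _, hcode⟩)
  rw [card_insert_of_notMem hu] at this
  omega

end Code

variable [DecidableEq ι]

lemma card_hammingBall_bool_le (v : ι → Bool) (r : ℕ) :
    #{w | hammingDist v w ≤ r} ≤ ∑ k ∈ range (r + 1), (Fintype.card ι).choose k := by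
  let support : (ι → Bool) → Finset ι := fun w => {i | v i ≠ w i}
  have hinj : Function.Injective support := by
    intro w₁ w₂ h
    funext i
    have hi := congrArg (i ∈ ·) h
    simp only [support, mem_filter, mem_univ, true_and, eq_iff_iff] at hi
    revert hi
    cases v i <;> cases w₁ i <;> cases w₂ i <;> simp
  calc #{w | hammingDist v w ≤ r}
      ≤ #((range (r + 1)).biUnion fun k => powersetCard k (univ : Finset ι)) := by
        refine card_le_card_of_injOn support (fun w hw => ?_) hinj.injOn
        simp only [coe_filter, mem_univ, true_and, Set.mem_ofPred_eq] at hw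
        simp only [coe_biUnion, coe_range, Set.mem_iUnion, Set.mem_Iio, mem_coe,
          mem_powersetCard]
        exact ⟨_, Nat.lt_succ_of_le hw, subset_univ _, rfl⟩
    _ ≤ ∑ k ∈ range (r + 1), #(powersetCard k (univ : Finset ι)) := card_biUnion_le
    _ = ∑ k ∈ range (r + 1), (Fintype.card ι).choose k := by
        simp only [card_powersetCard, card_univ]

theorem exists_binary_code_gilbertVarshamov (r : ℕ) :
    ∃ V : Finset (ι → Bool), (∀ v ∈ V, ∀ w ∈ V, v ≠ w → r < hammingDist v w) ∧
      2 ^ Fintype.card ι ≤ #V * ∑ k ∈ range (r + 1), (Fintype.card ι).choose k := by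
  obtain ⟨V, hcode, hcover⟩ := exists_code_covering (ι := ι) (β := Bool) r
  refine ⟨V, hcode, ?_⟩
  let ball (v : ι → Bool) : Finset (ι → Bool) := {w | hammingDist v w ≤ r}
  have hunion : univ ⊆ V.biUnion ball := fun u _ => by
    obtain ⟨v, hv, hvu⟩ := hcover u
    exact mem_biUnion.2 ⟨v, hv, by simpa [ball] using hvu⟩
  calc 2 ^ Fintype.card ι = #(univ : Finset (ι → Bool)) := by simp
    _ ≤ #(V.biUnion ball) := card_le_card hunion
    _ ≤ ∑ v ∈ V, #{w | hammingDist v w ≤ r} := card_biUnion_le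
    _ ≤ ∑ _v ∈ V, ∑ k ∈ range (r + 1), (Fintype.card ι).choose k :=
        sum_le_sum fun v _ => card_hammingBall_bool_le v r
    _ = #V * ∑ k ∈ range (r + 1), (Fintype.card ι).choose k := by rw [sum_const, smul_eq_mul]

end Hamming

def boolSign (b : Bool) : ℝ := if b then 1 else -1

lemma boolSign_injective : Function.Injective boolSign := by
  intro a b
  cases a <;> cases b <;> norm_num [boolSign]

lemma boolSign_eq_neg_one_or_eq_one (b : Bool) : boolSign b = -1 ∨ boolSign b = 1 := by
  cases b <;> simp [boolSign]

lemma sum_abs_sub_boolSign {ι : Type*} [Fintype ι] (a b : ι → Bool) :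
    ∑ i, |boolSign (a i) - boolSign (b i)| = 2 * hammingDist a b := by
  have hterm : ∀ i, |boolSign (a i) - boolSign (b i)| = 2 * if a i ≠ b i then 1 else 0 := by
    intro i
    cases a i <;> cases b i <;> norm_num [boolSign]
  simp only [hterm, ← mul_sum, hammingDist, card_filter, Nat.cast_sum, Nat.cast_ite,
    Nat.cast_one, Nat.cast_zero]

lemma sum_range_choose_mul_pow_le {x : ℝ} (hx₀ : 0 ≤ x) (hx₁ : x ≤ 1) {n r : ℕ}
    (hr : r ≤ n) :
    (∑ k ∈ range (r + 1), (n.choose k : ℝ)) * x ^ r ≤ (x + 1) ^ n := by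
  rw [add_pow, sum_mul]
  calc ∑ k ∈ range (r + 1), (n.choose k : ℝ) * x ^ r
      ≤ ∑ k ∈ range (r + 1), x ^ k * 1 ^ (n - k) * n.choose k := by
        refine sum_le_sum fun k hk => ?_
        rw [one_pow, mul_one, mul_comm]
        exact mul_le_mul_of_nonneg_right
          (pow_le_pow_of_le_one hx₀ hx₁ (Nat.lt_succ_iff.1 (mem_range.1 hk))) (by positivity)
    _ ≤ ∑ k ∈ range (n + 1), x ^ k * 1 ^ (n - k) * n.choose k :=
        sum_le_sum_of_subset_of_nonneg (range_subset_range.2 (by omega))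
          fun _ _ _ => by positivity

lemma sum_range_choose_le_three_pow_mul {n r : ℕ} (hr : r ≤ n) :
    ∑ k ∈ range (r + 1), (n.choose k : ℝ) ≤ 3 ^ r * (4 / 3) ^ n := by
  have h := sum_range_choose_mul_pow_le (x := 1 / 3) (by norm_num) (by norm_num) hr
  rw [div_pow, one_pow, ← div_eq_mul_one_div, div_le_iff₀ (by positivity)] at h
  linarith

lemma pow_three_mul_four_thirds_pow_pow_eight_le {n r : ℕ} (hr : 4 * r ≤ n) :
    ((3 : ℝ) ^ r * (4 / 3) ^ n) ^ 8 ≤ 128 ^ n := by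
  calc ((3 : ℝ) ^ r * (4 / 3) ^ n) ^ 8 = 3 ^ (8 * r) * ((4 / 3) ^ 8) ^ n := by
        rw [mul_pow, ← pow_mul, ← pow_mul, ← pow_mul, mul_comm r, mul_comm n]
    _ ≤ 3 ^ (2 * n) * ((4 / 3) ^ 8) ^ n := by
        gcongr ?_ * _
        exact pow_le_pow_right₀ (by norm_num) (by omega)
    _ = (9 * (4 / 3) ^ 8) ^ n := by rw [pow_mul, mul_pow]; norm_num
    _ ≤ 128 ^ n := pow_le_pow_left₀ (by positivity) (by norm_num) n

lemma two_rpow_div_eight_le_of_pow_le_mul_sum_choose {n r : ℕ} (hr : 4 * r ≤ n) {c : ℝ}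
    (hc : 0 ≤ c) (h : 2 ^ n ≤ c * ∑ k ∈ range (r + 1), (n.choose k : ℝ)) :
    (2 : ℝ) ^ ((n : ℝ) / 8) ≤ c := by
  set B : ℝ := 3 ^ r * (4 / 3) ^ n
  have hB : 0 < B := by positivity
  have hcB : 2 ^ n ≤ c * B :=
    h.trans (mul_le_mul_of_nonneg_left (sum_range_choose_le_three_pow_mul (by omega)) hc)
  have h8 : ((2 : ℝ) ^ ((n : ℝ) / 8)) ^ 8 = 2 ^ n := by
    rw [← Real.rpow_mul_natCast (by norm_num)]; norm_num
  have hkey : (2 : ℝ) ^ ((n : ℝ) / 8) * B ≤ 2 ^ n := by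
    refine le_of_pow_le_pow_left₀ (n := 8) (by norm_num) (by positivity) ?_
    calc ((2 : ℝ) ^ ((n : ℝ) / 8) * B) ^ 8 = 2 ^ n * B ^ 8 := by rw [mul_pow, h8]
      _ ≤ 2 ^ n * 128 ^ n := by gcongr; exact pow_three_mul_four_thirds_pow_pow_eight_le hr
      _ = (2 ^ n) ^ 8 := by rw [← mul_pow, ← pow_mul, mul_comm n, pow_mul]; norm_num
  exact le_of_mul_le_mul_right (hkey.trans hcB) hB

theorem stmt_9_general (n : ℕ) :
    ∃ 𝒱 : Finset (Fin n → ℝ),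
      (∀ v ∈ 𝒱, ∀ i, v i = -1 ∨ v i = 1) ∧
      (2 : ℝ) ^ ((n : ℝ) / 8) ≤ (𝒱.card : ℝ) ∧
      (∀ v ∈ 𝒱, ∀ w ∈ 𝒱, v ≠ w → (n : ℝ) / 2 ≤ ∑ i, |v i - w i|) := by
  obtain ⟨V, hdist, hcard⟩ := exists_binary_code_gilbertVarshamov (ι := Fin n) (n / 4)
  rw [Fintype.card_fin] at hcard
  have hinj : Function.Injective fun (v : Fin n → Bool) => boolSign ∘ v :=
    boolSign_injective.comp_left
  refine ⟨V.image (boolSign ∘ ·), ?_, ?_, ?_⟩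
  · simp only [mem_image, forall_exists_index, and_imp]
    rintro _ v _ rfl i
    exact boolSign_eq_neg_one_or_eq_one (v i)
  · rw [card_image_of_injective _ hinj]
    exact two_rpow_div_eight_le_of_pow_le_mul_sum_choose (r := n / 4) (by omega)
      (Nat.cast_nonneg _) (by exact_mod_cast hcard)
  · simp only [mem_image, forall_exists_index, and_imp]
    rintro _ a ha rfl _ b hb rfl hab
    have hn : n < 4 * hammingDist a b := by
      have := hdist a ha b hb (fun h => hab (h ▸ rfl))
      omega
    rw [Function.comp_def, Function.comp_def, sum_abs_sub_boolSign]
    have : (n : ℝ) < 4 * (hammingDist a b : ℝ) := by exact_mod_cast hn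
    linarith

/-- Gilbert–Varshamov: there is a subset of the hypercube `{-1,1}^n` of cardinality at
least `2^(n/8)` whose elements are pairwise at `ℓ¹`-distance at least `n/2`. -/
theorem stmt_9 (n : ℕ) (hn : 1 ≤ n) :
    ∃ 𝒱 : Finset (Fin n → ℝ),
      (∀ v ∈ 𝒱, ∀ i, v i = -1 ∨ v i = 1) ∧
      (2 : ℝ) ^ ((n : ℝ) / 8) ≤ (𝒱.card : ℝ) ∧
      (∀ v ∈ 𝒱, ∀ w ∈ 𝒱, v ≠ w → (n : ℝ) / 2 ≤ ∑ i, |v i - w i|) :=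
  stmt_9_general n
end

section
/- Let p, v ∈ ℝ^{S'} where p is a probability vector, v(g) = 0, and ‖v‖_∞ ≤ B̃ for some B̃ > 0. Define f(p,v,n) = p·v + max{2√(Var(p,v)·ι/n), 4B̃ι/n} with Var(p,v) = p·v² − (p·v)², for fixed ι, n > 0. Then at every point where f is differentiable in v, the partial derivatives satisfy ∂f/∂v(s) ≥ 0 for every s ≠ g, and Σ_{s≠g} ∂f/∂v(s) ≤ 1 − p(g)². -/
open Finset

/-- Derivative bound for the bonus function `f(p,v,n) = p·v + max{2√(Var(p,v)ι/n), 4B̃ι/n}`: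
the partial derivatives (given by the explicit formulas on each region of
differentiability) are nonnegative and sum (over `s ≠ g`) to at most `1 - p(g)²`. -/
theorem stmt_10 {S' : Type*} [Fintype S'] [DecidableEq S'] (g : S')
    (p : S' → ℝ) (hp0 : ∀ s, 0 ≤ p s) (hp1 : ∑ s, p s = 1)
    (v : S' → ℝ) (hvg : v g = 0)
    (B ι n : ℝ) (hB : 0 < B) (hι : 0 < ι) (hn : 0 < n)
    (hv0 : ∀ s, 0 ≤ v s) (hvB : ∀ s, v s ≤ B)
    (Var : ℝ) (hVar : Var = (∑ s, p s * (v s) ^ 2) - (∑ s, p s * v s) ^ 2)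
    (D : S' → ℝ)
    (hD : ∀ s, D s =
      if 4 * B * ι / n ≤ 2 * Real.sqrt (Var * ι / n)
      then p s + 2 * Real.sqrt (ι / n) * (p s * (v s - ∑ t, p t * v t)) / Real.sqrt Var
      else p s) :
    (∀ s, s ≠ g → 0 ≤ D s) ∧
    (∑ s ∈ Finset.univ.filter (fun s : S' => s ≠ g), D s) ≤ 1 - (p g) ^ 2 := by
  have hfilter : Finset.univ.filter (fun s : S' => s ≠ g) = Finset.univ.erase g :=
    Finset.filter_ne' _ _
  have hpg1 : p g ≤ 1 := by
    have h := Finset.single_le_sum (f := p) (fun s _ => hp0 s) (Finset.mem_univ g)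
    rw [hp1] at h; exact h
  set μ : ℝ := ∑ t, p t * v t with hμ
  clear_value μ
  have hμ0 : 0 ≤ μ := hμ ▸ Finset.sum_nonneg fun s _ => mul_nonneg (hp0 s) (hv0 s)
  have h3 : ∑ s ∈ Finset.univ.erase g, p s = 1 - p g := by
    rw [Finset.sum_erase_eq_sub (Finset.mem_univ g), hp1]
  have hμB' : μ ≤ B * (1 - p g) := by
    have hsplit : μ = ∑ s ∈ Finset.univ.erase g, p s * v s := by
      rw [Finset.sum_erase_eq_sub (Finset.mem_univ g), hvg, hμ]; ring
    calc μ = ∑ s ∈ Finset.univ.erase g, p s * v s := hsplit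
      _ ≤ ∑ s ∈ Finset.univ.erase g, p s * B :=
          Finset.sum_le_sum fun s _ => mul_le_mul_of_nonneg_left (hvB s) (hp0 s)
      _ = B * (1 - p g) := by rw [← Finset.sum_mul, h3]; ring
  by_cases hc : 4 * B * ι / n ≤ 2 * Real.sqrt (Var * ι / n)
  · set a : ℝ := Real.sqrt (ι / n) with ha
    set t : ℝ := Real.sqrt Var with ht
    have ha0 : 0 ≤ a := Real.sqrt_nonneg _
    have ha2 : a ^ 2 = ι / n := Real.sq_sqrt (by positivity)
    have hs0 : 0 < Real.sqrt (Var * ι / n) := by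
      have : 0 < 4 * B * ι / n := by positivity
      linarith
    have hVpos0 : 0 < Var * ι / n := Real.sqrt_pos.mp hs0
    have hsq : (2 * B * ι / n) * (2 * B * ι / n) ≤ Var * ι / n := by
      have h1 : 2 * B * ι / n ≤ Real.sqrt (Var * ι / n) := by
        have e : 4 * B * ι / n = 2 * (2 * B * ι / n) := by ring
        rw [e] at hc; linarith
      have h2 := mul_self_le_mul_self (by positivity) h1
      rwa [Real.mul_self_sqrt (le_of_lt hVpos0)] at h2
    have hιn : 0 < ι / n := by positivity
    have hVarlb : 4 * B ^ 2 * (ι / n) ≤ Var := by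
      have h4 : 4 * B ^ 2 * (ι / n) * (ι / n) ≤ Var * (ι / n) := by
        have e1 : (2 * B * ι / n) * (2 * B * ι / n) = 4 * B ^ 2 * (ι / n) * (ι / n) := by ring
        have e2 : Var * ι / n = Var * (ι / n) := by ring
        rw [e1, e2] at hsq; exact hsq
      exact le_of_mul_le_mul_right h4 hιn
    have hVpos : 0 < Var := lt_of_lt_of_le (by positivity) hVarlb
    have htpos : 0 < t := by rw [ht]; exact Real.sqrt_pos.mpr hVpos
    have hkey : 2 * a * B ≤ t := by
      rw [ht, show (2 : ℝ) * a * B = Real.sqrt ((2 * a * B) ^ 2) from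
        (Real.sqrt_sq (by positivity)).symm]
      apply Real.sqrt_le_sqrt
      nlinarith [ha2]
    have hDval : ∀ s, D s = p s + 2 * a * (p s * (v s - μ)) / t := fun s => by
      rw [hD s, if_pos hc]
    constructor
    · intro s _
      rw [hDval s]
      have hnum : 0 ≤ p s * t + 2 * a * (p s * (v s - μ)) := by
        have hμB : μ ≤ B := le_trans hμB' (by nlinarith [mul_nonneg hB.le (hp0 g)])
        have h5 : 2 * a * μ ≤ 2 * a * B :=
          mul_le_mul_of_nonneg_left hμB (by positivity)
        nlinarith [mul_nonneg (hp0 s) (sub_nonneg.mpr (le_trans h5 hkey)),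
          mul_nonneg (mul_nonneg ha0 (hp0 s)) (hv0 s)]
      have heq : p s + 2 * a * (p s * (v s - μ)) / t
          = (p s * t + 2 * a * (p s * (v s - μ))) / t := by
        field_simp
      rw [heq]
      exact div_nonneg hnum htpos.le
    · rw [hfilter]
      have h1 : ∑ s, p s * (v s - μ) = 0 := by
        have : ∑ s, p s * (v s - μ) = (∑ s, p s * v s) - (∑ s, p s) * μ := by
          rw [Finset.sum_mul, ← Finset.sum_sub_distrib]
          exact Finset.sum_congr rfl fun s _ => by ring
        rw [this, hp1, ← hμ]; ring
      have h2 : ∑ s ∈ Finset.univ.erase g, p s * (v s - μ) = p g * μ := by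
        rw [Finset.sum_erase_eq_sub (Finset.mem_univ g), h1, hvg]; ring
      have hsum : ∑ s ∈ Finset.univ.erase g, D s = (1 - p g) + (2 * a / t) * (p g * μ) := by
        rw [Finset.sum_congr rfl fun s _ => hDval s, Finset.sum_add_distrib, h3]
        congr 1
        rw [show (∑ s ∈ Finset.univ.erase g, 2 * a * (p s * (v s - μ)) / t)
            = ∑ s ∈ Finset.univ.erase g, (2 * a / t) * (p s * (v s - μ)) from
          Finset.sum_congr rfl fun s _ => by ring, ← Finset.mul_sum, h2]
      rw [hsum]
      have hfin : (2 * a / t) * (p g * μ) ≤ p g - p g ^ 2 := by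
        rw [div_mul_eq_mul_div, div_le_iff₀ htpos]
        have hA : 0 ≤ (p g * (1 - p g)) * (t - 2 * a * B) :=
          mul_nonneg (mul_nonneg (hp0 g) (by linarith)) (by linarith)
        have hBf : 0 ≤ (2 * a * p g) * (B * (1 - p g) - μ) :=
          mul_nonneg (mul_nonneg (by linarith : (0:ℝ) ≤ 2 * a) (hp0 g)) (by linarith)
        have expand : (p g * (1 - p g)) * (t - 2 * a * B) + (2 * a * p g) * (B * (1 - p g) - μ)
            = (p g - p g ^ 2) * t - 2 * a * (p g * μ) := by ring
        linarith [hA, hBf, expand]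
      linarith
  · have hDval : ∀ s, D s = p s := fun s => by rw [hD s, if_neg hc]
    constructor
    · intro s _; rw [hDval s]; exact hp0 s
    · rw [hfilter, Finset.sum_congr rfl fun s _ => hDval s, h3]
      nlinarith [hp0 g]
end

section
/- Consider a finite-state Markov chain with absorbing goal state g, a stationary deterministic policy π̄, true transition kernel P, estimated kernel P̃', true cost c and estimated cost ĉ (with c(g,·)=ĉ(g,·)=0), and a nonnegative bonus b. Suppose π̄ is proper under P (finite expected hitting time of g from every state) so V^{π̄} is finite and satisfies the Bellman equation V^{π̄}(s) = c(s,π̄(s)) + P_{s,π̄(s)}V^{π̄}. Suppose V̄ : S' → ℝ with V̄(g)=0 satisfies V̄(s) = ĉ(s,π̄(s)) + P̃'_{s,π̄(s)}V̄ + b(s,π̄(s)) for all s ≠ g, and that ‖V̄‖_∞ < ∞. Then for any initial state distribution, V^{π̄} − V̄ = Σ_{h=0}^∞ Σ_{s≠g} ξ_h^{π̄}(s)·[(P_{s,π̄(s)} − P̃'_{s,π̄(s)})V̄ + c(s,π̄(s)) − ĉ(s,π̄(s)) − b(s,π̄(s))], where ξ_h^{π̄}(s) is the probability of being at state s at step h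 under π̄ and P. -/
open Finset Filter Topology

/-!
Write `D = V^{π̄} - V̄` and `e` for the one-step error `(P - P̃')V̄ + c - ĉ - b`. Subtracting
the two Bellman equations gives `D = e + P D` off the goal, while `D(g) = (P D)(g) = 0`.
Hence `A_h = Σ_{s≠g} ξ_h(s) D(s)` satisfies `A_h = Σ_{s≠g} ξ_h(s) e(s) + A_{h+1}`,
and the series telescopes to `A_0`: properness makes `Σ_h Σ_{s≠g} ξ_h(s)` finite, which forces
`A_h → 0` and makes the error series absolutely summable.
-/

theorem tsum_eq_of_telescoping {α : Type*} [AddCommGroup α] [TopologicalSpace α]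
    [IsTopologicalAddGroup α] [T2Space α] {f A : ℕ → α} (hf : Summable f)
    (hA : Tendsto A atTop (𝓝 0)) (hstep : ∀ h, A h = f h + A (h + 1)) :
    ∑' h, f h = A 0 := by
  have hpartial : ∀ n, ∑ h ∈ range n, f h = A 0 - A n := fun n => by
    rw [← sum_range_sub' A n]
    exact sum_congr rfl fun h _ => eq_sub_of_add_eq (hstep h).symm
  refine (hf.hasSum_iff_tendsto_nat.mpr ?_).tsum_eq
  simpa only [hpartial, sub_zero] using tendsto_const_nhds.sub hA

section Transient

variable {S : Type*} [Fintype S]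

theorem abs_sum_mul_le_sum_mul_norm {T : Finset S} {x : S → ℝ} (hx : ∀ s ∈ T, 0 ≤ x s)
    (w : S → ℝ) : |∑ s ∈ T, x s * w s| ≤ (∑ s ∈ T, x s) * ‖w‖ := by
  rw [sum_mul]
  refine (abs_sum_le_sum_abs _ _).trans (sum_le_sum fun s hs => ?_)
  rw [abs_mul, abs_of_nonneg (hx s hs)]
  exact mul_le_mul_of_nonneg_left (by simpa using norm_le_pi_norm w s) (hx s hs)

variable {ξ : ℕ → S → ℝ} {T : Finset S}

theorem summable_sum_mul_of_summable_mass (hξ : ∀ h s, 0 ≤ ξ h s)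
    (hmass : Summable fun h => ∑ s ∈ T, ξ h s) (w : S → ℝ) :
    Summable fun h => ∑ s ∈ T, ξ h s * w s :=
  .of_norm_bounded (hmass.mul_right ‖w‖) fun h =>
    abs_sum_mul_le_sum_mul_norm (fun s _ => hξ h s) w

theorem tendsto_sum_mul_of_summable_mass (hξ : ∀ h s, 0 ≤ ξ h s)
    (hmass : Summable fun h => ∑ s ∈ T, ξ h s) (w : S → ℝ) :
    Tendsto (fun h => ∑ s ∈ T, ξ h s * w s) atTop (𝓝 0) := by
  refine squeeze_zero_norm (fun h => abs_sum_mul_le_sum_mul_norm (fun s _ => hξ h s) w) ?_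
  simpa using hmass.tendsto_atTop_zero.mul_const ‖w‖

theorem nonneg_of_forward_recursion {Q : S → S → ℝ} (hQ : ∀ s s', 0 ≤ Q s s')
    (h0 : ∀ s, 0 ≤ ξ 0 s) (hrec : ∀ h s', ξ (h + 1) s' = ∑ s, ξ h s * Q s s') :
    ∀ h s, 0 ≤ ξ h s := by
  intro h
  induction h with
  | zero => exact h0
  | succ h ih =>
    intro s'
    rw [hrec]
    exact sum_nonneg fun s _ => mul_nonneg (ih s) (hQ s s')

theorem sum_mul_eq_sum_mul_sum_of_forward {Q : S → S → ℝ} {x x' : S → ℝ}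
    (hx' : ∀ s', x' s' = ∑ s, x s * Q s s') (w : S → ℝ) :
    ∑ s', x' s' * w s' = ∑ s, x s * ∑ s', Q s s' * w s' := by
  simp only [hx', sum_mul, mul_sum, mul_assoc]
  exact sum_comm

end Transient

section Absorbing

variable {S : Type*} [Fintype S] [DecidableEq S]

theorem sum_filter_ne_mul_eq_sum_mul (g : S) (x : S → ℝ) {w : S → ℝ} (hw : w g = 0) :
    ∑ s ∈ univ.filter (· ≠ g), x s * w s = ∑ s, x s * w s :=
  sum_filter_of_ne fun s _ hs hsg => hs (by rw [hsg, hw, mul_zero])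

theorem sum_filter_ne_mul_eq_add_of_forward (g : S) {Q : S → S → ℝ}
    (hQg : ∀ s', Q g s' = if s' = g then 1 else 0) {D e : S → ℝ} (hDg : D g = 0)
    (hD : ∀ s, s ≠ g → D s = e s + ∑ s', Q s s' * D s') {x x' : S → ℝ}
    (hx' : ∀ s', x' s' = ∑ s, x s * Q s s') :
    ∑ s ∈ univ.filter (· ≠ g), x s * D s
      = ∑ s ∈ univ.filter (· ≠ g), x s * e s
        + ∑ s ∈ univ.filter (· ≠ g), x' s * D s := by
  have hQDg : ∑ s', Q g s' * D s' = 0 := by simp [hQg, hDg]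
  rw [sum_filter_ne_mul_eq_sum_mul g x' hDg, sum_mul_eq_sum_mul_sum_of_forward hx',
    ← sum_filter_ne_mul_eq_sum_mul g x hQDg, ← sum_add_distrib]
  refine sum_congr rfl fun s hs => ?_
  rw [hD s (mem_filter.mp hs).2, mul_add]

end Absorbing

theorem stmt_17_general {S A : Type*} [Fintype S] [DecidableEq S]
    (g : S) (πb : S → A)
    (P Ptil : S → A → S → ℝ) (c chat b : S → A → ℝ)
    (hP0 : ∀ s a s', 0 ≤ P s a s')
    (habs : ∀ (a : A) (s' : S), P g a s' = if s' = g then (1 : ℝ) else 0)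
    (Vpi Vbar : S → ℝ) (hVpig : Vpi g = 0) (hVbarg : Vbar g = 0)
    (hBell : ∀ s, s ≠ g → Vpi s = c s (πb s) + ∑ s', P s (πb s) s' * Vpi s')
    (hVbar : ∀ s, s ≠ g →
      Vbar s = chat s (πb s) + (∑ s', Ptil s (πb s) s' * Vbar s') + b s (πb s))
    (ξ0 : S → ℝ) (hξ00 : ∀ s, 0 ≤ ξ0 s)
    (ξ : ℕ → S → ℝ) (hξinit : ξ 0 = ξ0)
    (hξrec : ∀ h s', ξ (h + 1) s' = ∑ s, ξ h s * P s (πb s) s')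
    -- properness of `π̄`: the expected hitting time of `g` is finite
    (hproper : Summable (fun h : ℕ =>
      ∑ s ∈ Finset.univ.filter (fun s : S => s ≠ g), ξ h s)) :
    (∑ s, ξ0 s * (Vpi s - Vbar s))
      = ∑' h : ℕ, ∑ s ∈ Finset.univ.filter (fun s : S => s ≠ g), ξ h s *
          (((∑ s', P s (πb s) s' * Vbar s') - ∑ s', Ptil s (πb s) s' * Vbar s')
            + c s (πb s) - chat s (πb s) - b s (πb s)) := by
  set D : S → ℝ := fun s => Vpi s - Vbar s
  have hDg : D g = 0 := by simp [D, hVpig, hVbarg]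
  have hD : ∀ s, s ≠ g → D s =
      ((∑ s', P s (πb s) s' * Vbar s') - ∑ s', Ptil s (πb s) s' * Vbar s')
        + c s (πb s) - chat s (πb s) - b s (πb s) + ∑ s', P s (πb s) s' * D s' := by
    intro s hs
    simp only [D, mul_sub, sum_sub_distrib]
    rw [hBell s hs, hVbar s hs]
    ring
  have hξ : ∀ h s, 0 ≤ ξ h s :=
    nonneg_of_forward_recursion (fun s => hP0 s (πb s)) (hξinit ▸ hξ00) hξrec
  rw [tsum_eq_of_telescoping (summable_sum_mul_of_summable_mass hξ hproper _)
      (tendsto_sum_mul_of_summable_mass hξ hproper D)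
      (fun h => sum_filter_ne_mul_eq_add_of_forward g (habs (πb g)) hDg hD (hξrec h)),
    sum_filter_ne_mul_eq_sum_mul g _ hDg, hξinit]

/-- Simulation-lemma style exact value decomposition for SSP: for a proper stationary
deterministic policy `π̄` with value `V^{π̄}` and a bounded `V̄` solving the empirical
(bonus-augmented) Bellman equation,
`V^{π̄} - V̄ = Σ_h Σ_{s≠g} ξ_h(s) [(P - P̃')V̄ + c - ĉ - b](s, π̄(s))`. -/
theorem stmt_17 {S A : Type*} [Fintype S] [DecidableEq S]
    (g : S) (πb : S → A)
    (P Ptil : S → A → S → ℝ) (c chat b : S → A → ℝ)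
    (hP0 : ∀ s a s', 0 ≤ P s a s') (hP1 : ∀ s a, ∑ s', P s a s' = 1)
    (habs : ∀ (a : A) (s' : S), P g a s' = if s' = g then (1 : ℝ) else 0)
    (hcg : ∀ a, c g a = 0) (hchatg : ∀ a, chat g a = 0)
    (hb0 : ∀ s a, 0 ≤ b s a)
    (Vpi Vbar : S → ℝ) (hVpig : Vpi g = 0) (hVbarg : Vbar g = 0)
    (hBell : ∀ s, s ≠ g → Vpi s = c s (πb s) + ∑ s', P s (πb s) s' * Vpi s')
    (hVbar : ∀ s, s ≠ g →
      Vbar s = chat s (πb s) + (∑ s', Ptil s (πb s) s' * Vbar s') + b s (πb s))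
    (ξ0 : S → ℝ) (hξ00 : ∀ s, 0 ≤ ξ0 s) (hξ01 : ∑ s, ξ0 s = 1)
    (ξ : ℕ → S → ℝ) (hξinit : ξ 0 = ξ0)
    (hξrec : ∀ h s', ξ (h + 1) s' = ∑ s, ξ h s * P s (πb s) s')
    -- properness of `π̄`: the expected hitting time of `g` is finite
    (hproper : Summable (fun h : ℕ =>
      ∑ s ∈ Finset.univ.filter (fun s : S => s ≠ g), ξ h s)) :
    (∑ s, ξ0 s * (Vpi s - Vbar s))
      = ∑' h : ℕ, ∑ s ∈ Finset.univ.filter (fun s : S => s ≠ g), ξ h s *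
          (((∑ s', P s (πb s) s' * Vbar s') - ∑ s', Ptil s (πb s) s' * Vbar s')
            + c s (πb s) - chat s (πb s) - b s (πb s)) :=
  stmt_17_general g πb P Ptil c chat b hP0 habs Vpi Vbar hVpig hVbarg hBell hVbar ξ0 hξ00 ξ hξinit
    hξrec hproper
end

section
/- In the same SSP setting, let π* be a proper deterministic policy with value V* satisfying V*(s) = c(s,π*(s)) + P_{s,π*(s)}V* and V*(g) = 0, and let V̄ with V̄(g)=0, ‖V̄‖_∞ < ∞, satisfy for every s ≠ g: V̄(s) ≤ ĉ(s,π*(s)) + P̃'_{s,π*(s)}V̄ + b(s,π*(s)). Then V̄(s̄) − V*(s̄) ≤ Σ_{h=0}^∞ Σ_{s≠g} ξ*_h(s)·[(P̃'_{s,π*(s)} − P_{s,π*(s)})V̄ + ĉ(s,π*(s)) − c(s,π*(s)) + b(s,π*(s))], where ξ*_h(s) is the probability of being at s at step h under π* and P starting from s̄. -/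
/-!
Write `W = V̄ - V⋆`, which vanishes at `g`. Subtracting the Bellman equation of `V⋆` from the
subsolution inequality of `V̄` gives, at every `s ≠ g`, the one-step bound `W ≤ Δ + P_{π⋆} W`,
where `Δ` is the bracket in the claimed sum. Weighting by the occupation measures `ξ⋆_h`
(restricted to `s ≠ g`, which is harmless because `g` is absorbing and `W g = 0`) turns it into
`e_h ≤ d_h + e_{h+1}` for `e_h = Σ_{s≠g} ξ⋆_h(s) W(s)` and `d_h = Σ_{s≠g} ξ⋆_h(s) Δ(s)`.
Telescoping gives `W(s̄) = e_0 ≤ Σ_{h<N} d_h + e_N`, and properness makes `e_N → 0`.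
-/

open Finset Filter Topology

theorem le_tsum_of_le_add_succ {e d : ℕ → ℝ} (hstep : ∀ n, e n ≤ d n + e (n + 1))
    (hd : Summable d) (he : Tendsto e atTop (𝓝 0)) : e 0 ≤ ∑' n, d n := by
  have htel : ∀ N, e 0 ≤ (∑ n ∈ range N, d n) + e N := by
    intro N
    induction N with
    | zero => simp
    | succ N ih => rw [sum_range_succ]; linarith [hstep N]
  have hlim : Tendsto (fun N => (∑ n ∈ range N, d n) + e N) atTop (𝓝 (∑' n, d n)) := by
    simpa using hd.hasSum.tendsto_sum_nat.add he
  exact ge_of_tendsto' hlim htel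

section OccupationMeasure

variable {S : Type*} {K : S → S → ℝ} {ξ : ℕ → S → ℝ}

theorem occupation_nonneg [Fintype S] (hK : ∀ s s', 0 ≤ K s s') (h0 : ∀ s, 0 ≤ ξ 0 s)
    (hrec : ∀ n s', ξ (n + 1) s' = ∑ s, ξ n s * K s s') (n : ℕ) (s : S) : 0 ≤ ξ n s := by
  induction n generalizing s with
  | zero => exact h0 s
  | succ n ih => rw [hrec]; exact sum_nonneg fun s' _ => mul_nonneg (ih s') (hK s' s)

theorem summable_sum_occupation_mul {T : Finset S} (hξ : ∀ n s, 0 ≤ ξ n s)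
    (hT : Summable fun n => ∑ s ∈ T, ξ n s) (f : S → ℝ) :
    Summable fun n => ∑ s ∈ T, ξ n s * f s := by
  refine summable_sum fun s hs => Summable.mul_right _ ?_
  exact hT.of_nonneg_of_le (hξ · s) fun n => single_le_sum (fun s _ => hξ n s) hs

theorem sum_occupation_succ_mul [Fintype S] [DecidableEq S] {g : S}
    (hK : ∀ s', K g s' = if s' = g then 1 else 0)
    (hrec : ∀ n s', ξ (n + 1) s' = ∑ s, ξ n s * K s s') {W : S → ℝ} (hW : W g = 0) (n : ℕ) :
    ∑ s ∈ univ.filter (· ≠ g), ξ (n + 1) s * W s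
      = ∑ s ∈ univ.filter (· ≠ g), ξ n s * ∑ s', K s s' * W s' := by
  have hKW : ∑ s', K g s' * W s' = 0 := by simp [hK, hW]
  rw [sum_filter_of_ne fun s _ hs => by rintro rfl; simp [hW] at hs,
    sum_filter_of_ne fun s _ hs => by rintro rfl; simp [hKW] at hs]
  simp only [hrec, sum_mul, mul_sum, mul_assoc]
  exact sum_comm

end OccupationMeasure

theorem stmt_18_general {S A : Type*} [Fintype S] [DecidableEq S]
    (g sbar : S) (πs : S → A)
    (P Ptil : S → A → S → ℝ) (c chat b : S → A → ℝ)
    (hP0 : ∀ s a s', 0 ≤ P s a s')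
    (habs : ∀ (a : A) (s' : S), P g a s' = if s' = g then (1 : ℝ) else 0)
    (Vstar Vbar : S → ℝ) (hVstarg : Vstar g = 0) (hVbarg : Vbar g = 0)
    (hBell : ∀ s, s ≠ g → Vstar s = c s (πs s) + ∑ s', P s (πs s) s' * Vstar s')
    (hVbar : ∀ s, s ≠ g →
      Vbar s ≤ chat s (πs s) + (∑ s', Ptil s (πs s) s' * Vbar s') + b s (πs s))
    (ξ : ℕ → S → ℝ)
    (hξinit : ∀ s, ξ 0 s = if s = sbar then (1 : ℝ) else 0)
    (hξrec : ∀ h s', ξ (h + 1) s' = ∑ s, ξ h s * P s (πs s) s')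
    -- properness of `π⋆`: the expected hitting time of `g` is finite
    (hproper : Summable (fun h : ℕ =>
      ∑ s ∈ Finset.univ.filter (fun s : S => s ≠ g), ξ h s)) :
    Vbar sbar - Vstar sbar
      ≤ ∑' h : ℕ, ∑ s ∈ Finset.univ.filter (fun s : S => s ≠ g), ξ h s *
          (((∑ s', Ptil s (πs s) s' * Vbar s') - ∑ s', P s (πs s) s' * Vbar s')
            + chat s (πs s) - c s (πs s) + b s (πs s)) := by
  set T := univ.filter (fun s : S => s ≠ g)
  set W := Vbar - Vstar
  let Δ : S → ℝ := fun s => ((∑ s', Ptil s (πs s) s' * Vbar s') - ∑ s', P s (πs s) s' * Vbar s')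
    + chat s (πs s) - c s (πs s) + b s (πs s)
  have hWg : W g = 0 := by simp [W, hVbarg, hVstarg]
  have hξ : ∀ n s, 0 ≤ ξ n s :=
    occupation_nonneg (fun s s' => hP0 s (πs s) s') (fun s => by rw [hξinit]; positivity) hξrec
  have hbound : ∀ s ∈ T, W s ≤ Δ s + ∑ s', P s (πs s) s' * W s' := by
    intro s hs
    have hsg : s ≠ g := (mem_filter.1 hs).2
    simp only [Δ, W, Pi.sub_apply, mul_sub, sum_sub_distrib]
    linarith [hVbar s hsg, hBell s hsg]
  have hstep : ∀ n, ∑ s ∈ T, ξ n s * W s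
      ≤ ∑ s ∈ T, ξ n s * Δ s + ∑ s ∈ T, ξ (n + 1) s * W s := by
    intro n
    rw [sum_occupation_succ_mul (habs (πs g)) hξrec hWg, ← sum_add_distrib]
    exact sum_le_sum fun s hs => by
      rw [← mul_add]; exact mul_le_mul_of_nonneg_left (hbound s hs) (hξ n s)
  have hstart : ∑ s ∈ T, ξ 0 s * W s = W sbar := by
    rw [sum_filter_of_ne fun s _ hs => by rintro rfl; simp [hWg] at hs]
    simp [hξinit]
  change W sbar ≤ ∑' n, ∑ s ∈ T, ξ n s * Δ s
  rw [← hstart]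
  exact le_tsum_of_le_add_succ hstep (summable_sum_occupation_mul hξ hproper Δ)
    (summable_sum_occupation_mul hξ hproper W).tendsto_atTop_zero

/-- Simulation-lemma style upper decomposition for SSP along the optimal proper policy:
if `V̄` is a subsolution of the pessimistic empirical Bellman operator along `π⋆`, then
`V̄(s̄) - V⋆(s̄) ≤ Σ_h Σ_{s≠g} ξ⋆_h(s) [(P̃' - P)V̄ + ĉ - c + b](s, π⋆(s))`. -/
theorem stmt_18 {S A : Type*} [Fintype S] [DecidableEq S]
    (g sbar : S) (πs : S → A)
    (P Ptil : S → A → S → ℝ) (c chat b : S → A → ℝ)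
    (hP0 : ∀ s a s', 0 ≤ P s a s') (hP1 : ∀ s a, ∑ s', P s a s' = 1)
    (habs : ∀ (a : A) (s' : S), P g a s' = if s' = g then (1 : ℝ) else 0)
    (hcg : ∀ a, c g a = 0) (hchatg : ∀ a, chat g a = 0)
    (Vstar Vbar : S → ℝ) (hVstarg : Vstar g = 0) (hVbarg : Vbar g = 0)
    (hBell : ∀ s, s ≠ g → Vstar s = c s (πs s) + ∑ s', P s (πs s) s' * Vstar s')
    (hVbar : ∀ s, s ≠ g →
      Vbar s ≤ chat s (πs s) + (∑ s', Ptil s (πs s) s' * Vbar s') + b s (πs s))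
    (ξ : ℕ → S → ℝ)
    (hξinit : ∀ s, ξ 0 s = if s = sbar then (1 : ℝ) else 0)
    (hξrec : ∀ h s', ξ (h + 1) s' = ∑ s, ξ h s * P s (πs s) s')
    -- properness of `π⋆`: the expected hitting time of `g` is finite
    (hproper : Summable (fun h : ℕ =>
      ∑ s ∈ Finset.univ.filter (fun s : S => s ≠ g), ξ h s)) :
    Vbar sbar - Vstar sbar
      ≤ ∑' h : ℕ, ∑ s ∈ Finset.univ.filter (fun s : S => s ≠ g), ξ h s *
          (((∑ s', Ptil s (πs s) s' * Vbar s') - ∑ s', P s (πs s) s' * Vbar s')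
            + chat s (πs s) - c s (πs s) + b s (πs s)) :=
  stmt_18_general g sbar πs P Ptil c chat b hP0 habs Vstar Vbar hVstarg hVbarg hBell hVbar ξ hξinit
    hξrec hproper
end
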